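/- Maximum principle for the partially degenerate operator L̂: Let ψ = (ψ₁,…,ψₙ) be a vector-valued function such that every ψ_i is continuous on Ω̄ with ∂ψ_i/∂t continuous on Ω, and ψₙ additionally has ∂ψₙ/∂x continuous on Ω̄ and ∂²ψₙ/∂x² continuous on Ω. If (b₀ψₙ)(0,t) ≥ 0 and (b₁ψₙ)(1,t) ≥ 0 for all t ∈ [0,T], ψ_i(x,0) ≥ 0 for all i and x ∈ [0,1], and (L̂ψ)_i(x,t) ≥ 0 for all i and all (x,t) ∈ Ω, then ψ_i(x,t) ≥ 0 for all i and all (x,t) ∈ Ω̄. -/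

import Mathlib

/-!
Let `m` be the minimum of all components over `Ω̄`, attained by `ψ i₀` at `(x₀, t₀)`, and
suppose `m < 0`; then `t₀ > 0`. As the off-diagonal coefficients are nonpositive and the row
sums exceed `α > 0`, the coupling term `∑ j, a i j * ψ j` lies strictly below
`a i i * (ψ i - m)`.

If `i₀` is the diffusive component, either `x₀ ∈ {0, 1}` and the Robin conditions force
`ψ i₀ x₀ t₀ ≥ 0`, or `x₀` is interior, where `∂ₜψ ≤ 0 ≤ ∂ₓ²ψ` and the negative coupling term
contradict `(L̂ψ)ₙ ≥ 0`. Otherwise the equation is only an ODE in `t`, with no information at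
`x ∈ {0, 1}`: with `A` the maximum of `a i₀ i₀`, `t ↦ exp (A t) (ψ i₀ x t - m)` is nondecreasing
for `0 < x < 1`, and the bound `exp (A t) (ψ i₀ x t - m) ≥ ψ i₀ x 0 - m > 0` extends by
continuity to `x ∈ [0, 1]`, contradicting `ψ i₀ x₀ t₀ = m`.
-/

open Set Filter Topology

theorem IsCompact.exists_forall_le_of_finite {ι X β : Type*} [Finite ι] [Nonempty ι]
    [TopologicalSpace X] [LinearOrder β] [TopologicalSpace β] [ClosedIicTopology β]
    {K : Set X} (hK : IsCompact K) (hne : K.Nonempty) {f : ι → X → β}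
    (hf : ∀ i, ContinuousOn (f i) K) : ∃ i, ∃ p ∈ K, ∀ j, ∀ q ∈ K, f i p ≤ f j q := by
  choose p hpK hp using fun i => hK.exists_isMinOn hne (hf i)
  obtain ⟨i, hi⟩ := Finite.exists_min fun i => f i (p i)
  exact ⟨i, p i, hpK i, fun j q hq => (hi j).trans (hp j hq)⟩

theorem sum_mul_lt_of_nonpos_of_ne {ι : Type*} [Fintype ι] {c ψ : ι → ℝ} {m : ℝ} (i : ι)
    (hc : ∀ j ≠ i, c j ≤ 0) (hψ : ∀ j, m ≤ ψ j) (hm : m < 0) (hsum : 0 < ∑ j, c j) :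
    ∑ j, c j * ψ j < c i * (ψ i - m) := by
  classical
  have hrest : ∑ j ∈ Finset.univ.erase i, c j * (ψ j - m) ≤ 0 :=
    Finset.sum_nonpos fun j hj =>
      mul_nonpos_of_nonpos_of_nonneg (hc j (Finset.ne_of_mem_erase hj)) (sub_nonneg.2 (hψ j))
  calc ∑ j, c j * ψ j = ∑ j, c j * (ψ j - m) + (∑ j, c j) * m := by
        simp only [mul_sub, Finset.sum_sub_distrib, Finset.sum_mul, sub_add_cancel]
    _ = c i * (ψ i - m) + ∑ j ∈ Finset.univ.erase i, c j * (ψ j - m) + (∑ j, c j) * m := by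
        rw [Finset.add_sum_erase _ (fun j => c j * (ψ j - m)) (Finset.mem_univ i)]
    _ < c i * (ψ i - m) := by linarith [mul_neg_of_pos_of_neg hsum hm]

theorem IsMinOn.hasDerivWithinAt_nonneg {f : ℝ → ℝ} {f' a b c : ℝ}
    (h : IsMinOn f (Icc a b) c) (hf : HasDerivWithinAt f f' (Icc a b) c)
    (hac : a ≤ c) (hcb : c < b) : 0 ≤ f' := by
  have hcone : b - c ∈ posTangentConeAt (Icc a b) c :=
    sub_mem_posTangentConeAt_of_segment_subset
      (by rw [segment_eq_Icc hcb.le]; exact Icc_subset_Icc_left hac)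
  have := h.localize.hasFDerivWithinAt_nonneg hf hcone
  simp only [ContinuousLinearMap.toSpanSingleton_apply, smul_eq_mul] at this
  exact nonneg_of_mul_nonneg_right this (sub_pos.2 hcb)

theorem IsMinOn.hasDerivWithinAt_nonpos {f : ℝ → ℝ} {f' a b c : ℝ}
    (h : IsMinOn f (Icc a b) c) (hf : HasDerivWithinAt f f' (Icc a b) c)
    (hac : a < c) (hcb : c ≤ b) : f' ≤ 0 := by
  have hcone : a - c ∈ posTangentConeAt (Icc a b) c :=
    sub_mem_posTangentConeAt_of_segment_subset
      (by rw [segment_symm, segment_eq_Icc hac.le]; exact Icc_subset_Icc_right hcb)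
  have := h.localize.hasFDerivWithinAt_nonneg hf hcone
  simp only [ContinuousLinearMap.toSpanSingleton_apply, smul_eq_mul] at this
  exact nonpos_of_mul_nonneg_right this (sub_neg.2 hac)

theorem IsMinOn.nonneg_of_robin {f f' : ℝ → ℝ} {κ a b x₀ : ℝ} (hab : a < b) (hκ : 0 ≤ κ)
    (hmin : IsMinOn f (Icc a b) x₀) (hx₀ : x₀ ∈ Icc a b \ Ioo a b)
    (hf : ∀ x ∈ Icc a b, HasDerivWithinAt f (f' x) (Icc a b) x)
    (ha : 0 ≤ f a - κ * f' a) (hb : 0 ≤ f b + κ * f' b) : 0 ≤ f x₀ := by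
  obtain rfl | rfl : x₀ = a ∨ x₀ = b := by simpa [Icc_sdiff_Ioo_same hab.le] using hx₀
  · have := hmin.hasDerivWithinAt_nonneg (hf x₀ (left_mem_Icc.2 hab.le)) le_rfl hab
    nlinarith [mul_nonneg hκ this]
  · have := hmin.hasDerivWithinAt_nonpos (hf x₀ (right_mem_Icc.2 hab.le)) hab le_rfl
    nlinarith [mul_nonpos_of_nonneg_of_nonpos hκ this]

theorem IsLocalMin.deriv_deriv_nonneg {f : ℝ → ℝ} {x : ℝ} (h : IsLocalMin f x)
    (hc : ContinuousAt f x) : 0 ≤ deriv (deriv f) x := by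
  by_contra! hneg
  have hconst : f =ᶠ[𝓝 x] fun _ => f x :=
    (h.and (isLocalMax_of_deriv_deriv_neg hneg h.deriv_eq_zero hc)).mono
      fun y hy => le_antisymm hy.2 hy.1
  have hderiv : deriv f =ᶠ[𝓝 x] fun _ => 0 :=
    hconst.eventuallyEq_nhds.mono fun y hy => by rw [hy.deriv_eq, deriv_const]
  rw [hderiv.deriv_eq, deriv_const] at hneg
  exact hneg.false

theorem IsLocalMin.nonneg_of_hasDerivAt_of_hasDerivAt {f f' : ℝ → ℝ} {f'' x : ℝ}
    (h : IsLocalMin f x) (hf : ∀ᶠ y in 𝓝 x, HasDerivAt f (f' y) y)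
    (hf' : HasDerivAt f' f'' x) : 0 ≤ f'' := by
  have hderiv : deriv f =ᶠ[𝓝 x] f' := hf.mono fun y hy => hy.deriv
  rw [← hf'.deriv, ← hderiv.deriv_eq]
  exact h.deriv_deriv_nonneg hf.self_of_nhds.continuousAt

theorem monotoneOn_exp_mul_of_hasDerivAt_add_mul_nonneg {u u' : ℝ → ℝ} {A a b : ℝ}
    (hu : ContinuousOn u (Icc a b)) (hu' : ∀ t ∈ Ioo a b, HasDerivAt u (u' t) t)
    (h : ∀ t ∈ Ioo a b, 0 ≤ u' t + A * u t) :
    MonotoneOn (fun t => Real.exp (A * t) * u t) (Icc a b) := by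
  have hderiv : ∀ t ∈ Ioo a b,
      HasDerivAt (fun t => Real.exp (A * t) * u t) (Real.exp (A * t) * (u' t + A * u t)) t :=
    fun t ht => (((hasDerivAt_id' t).const_mul A).exp.mul (hu' t ht)).congr_deriv (by ring)
  refine monotoneOn_of_hasDerivWithinAt_nonneg (f' := fun t => Real.exp (A * t) * (u' t + A * u t))
    (convex_Icc a b)
    ((by fun_prop : Continuous fun t => Real.exp (A * t)).continuousOn.mul hu) ?_ ?_
  · rw [interior_Icc]; exact fun t ht => (hderiv t ht).hasDerivWithinAt
  · rw [interior_Icc]; exact fun t ht => mul_nonneg (Real.exp_pos _).le (h t ht)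

theorem pos_of_hasDerivAt_add_mul_nonneg {X : Type*} [TopologicalSpace X] {S : Set X}
    {v v' : X → ℝ → ℝ} {A a b : ℝ}
    (hv : ContinuousOn (fun p : X × ℝ => v p.1 p.2) (closure S ×ˢ Icc a b))
    (hv' : ∀ x ∈ S, ∀ t ∈ Ioo a b, HasDerivAt (v x) (v' x t) t)
    (h : ∀ x ∈ S, ∀ t ∈ Ioo a b, 0 ≤ v' x t + A * v x t)
    (hinit : ∀ x ∈ closure S, 0 < v x a) :
    ∀ x ∈ closure S, ∀ t ∈ Icc a b, 0 < v x t := by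
  intro x hx t ht
  have ha : a ∈ Icc a b := left_mem_Icc.2 (ht.1.trans ht.2)
  have hslice : ∀ y ∈ closure S, ContinuousOn (v y) (Icc a b) := fun y hy =>
    hv.comp (f := fun s => (y, s)) (Continuous.continuousOn (by fun_prop)) fun s hs => ⟨hy, hs⟩
  have hmono : ∀ p ∈ S ×ˢ Icc a b, Real.exp (A * a) * v p.1 a ≤ Real.exp (A * p.2) * v p.1 p.2 :=
    fun p hp => monotoneOn_exp_mul_of_hasDerivAt_add_mul_nonneg (hslice p.1 (subset_closure hp.1))
      (hv' p.1 hp.1) (h p.1 hp.1) ha hp.2 hp.2.1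
  have hmem : (x, t) ∈ closure (S ×ˢ Icc a b) := by
    rw [closure_prod_eq, closure_Icc]; exact ⟨hx, ht⟩
  have hsub : S ×ˢ Icc a b ⊆ closure S ×ˢ Icc a b := prod_mono subset_closure subset_rfl
  have hinit_cont : ContinuousOn (fun p : X × ℝ => Real.exp (A * a) * v p.1 a)
      (closure S ×ˢ Icc a b) :=
    continuousOn_const.mul (hv.comp (f := fun p : X × ℝ => (p.1, a))
      (Continuous.continuousOn (by fun_prop)) fun p hp => ⟨hp.1, ha⟩)
  have hcont : ContinuousOn (fun p : X × ℝ => Real.exp (A * p.2) * v p.1 p.2)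
      (closure S ×ˢ Icc a b) :=
    (Continuous.continuousOn (by fun_prop)).mul hv
  have hle : Real.exp (A * a) * v x a ≤ Real.exp (A * t) * v x t :=
    ContinuousWithinAt.closure_le hmem ((hinit_cont _ ⟨hx, ht⟩).mono hsub)
      ((hcont _ ⟨hx, ht⟩).mono hsub) hmono
  exact pos_of_mul_pos_right ((mul_pos (Real.exp_pos _) (hinit x hx)).trans_le hle)
    (Real.exp_pos _).le

theorem lt_of_hasDerivWithinAt_add_mul_sub_nonneg {u u' : ℝ → ℝ → ℝ} {A m T : ℝ}
    (hu : ContinuousOn (fun p : ℝ × ℝ => u p.1 p.2) (Icc 0 1 ×ˢ Icc 0 T))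
    (hu' : ∀ x ∈ Ioo (0:ℝ) 1, ∀ t ∈ Ioc 0 T, HasDerivWithinAt (u x) (u' x t) (Icc 0 T) t)
    (h : ∀ x ∈ Ioo (0:ℝ) 1, ∀ t ∈ Ioc 0 T, 0 ≤ u' x t + A * (u x t - m))
    (hinit : ∀ x ∈ Icc (0:ℝ) 1, m < u x 0) :
    ∀ x ∈ Icc (0:ℝ) 1, ∀ t ∈ Icc 0 T, m < u x t := by
  rw [← closure_Ioo zero_ne_one] at hu hinit ⊢
  intro x hx t ht
  refine sub_pos.1 (pos_of_hasDerivAt_add_mul_nonneg (v := fun x t => u x t - m) (v' := u') (A := A)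
    (hu.sub continuousOn_const) (fun x hx t ht => ?_) (fun x hx t ht => h x hx t ⟨ht.1, ht.2.le⟩)
    (fun x hx => sub_pos.2 (hinit x hx)) x hx t ht)
  exact ((hu' x hx t ⟨ht.1, ht.2.le⟩).hasDerivAt (Icc_mem_nhds ht.1 ht.2)).sub_const m

theorem nonneg_of_isMin_of_robin_supersolution {u u' ux uxx r : ℝ → ℝ → ℝ} {ε κ T x₀ t₀ : ℝ}
    (hε : 0 ≤ ε) (hκ : 0 ≤ κ) (hx₀ : x₀ ∈ Icc (0:ℝ) 1) (ht₀ : t₀ ∈ Ioc 0 T)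
    (hmin : ∀ x ∈ Icc (0:ℝ) 1, ∀ t ∈ Icc 0 T, u x₀ t₀ ≤ u x t)
    (hu' : ∀ x ∈ Ioo (0:ℝ) 1, ∀ t ∈ Ioc 0 T, HasDerivWithinAt (u x) (u' x t) (Icc 0 T) t)
    (hux : ∀ t ∈ Icc 0 T, ∀ x ∈ Icc (0:ℝ) 1,
      HasDerivWithinAt (fun y => u y t) (ux x t) (Icc 0 1) x)
    (huxx : ∀ t ∈ Ioc 0 T, ∀ x ∈ Ioo (0:ℝ) 1,
      HasDerivWithinAt (fun y => ux y t) (uxx x t) (Ioo 0 1) x)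
    (hb0 : ∀ t ∈ Icc 0 T, 0 ≤ u 0 t - κ * ux 0 t)
    (hb1 : ∀ t ∈ Icc 0 T, 0 ≤ u 1 t + κ * ux 1 t)
    (hL : ∀ x ∈ Ioo (0:ℝ) 1, ∀ t ∈ Ioc 0 T, 0 ≤ u' x t - ε * uxx x t + r x t)
    (hr : r x₀ t₀ < 0) : 0 ≤ u x₀ t₀ := by
  have ht₀' : t₀ ∈ Icc 0 T := Ioc_subset_Icc_self ht₀
  have hminx : IsMinOn (fun y => u y t₀) (Icc 0 1) x₀ := fun y hy => hmin y hy t₀ ht₀'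
  by_cases hx₀I : x₀ ∈ Ioo 0 1
  · have hut : u' x₀ t₀ ≤ 0 :=
      IsMinOn.hasDerivWithinAt_nonpos (fun s hs => hmin x₀ hx₀ s hs) (hu' x₀ hx₀I t₀ ht₀)
        ht₀.1 ht₀.2
    have huxx_nonneg : 0 ≤ uxx x₀ t₀ :=
      (hminx.isLocalMin (Icc_mem_nhds hx₀I.1 hx₀I.2)).nonneg_of_hasDerivAt_of_hasDerivAt
        (eventually_of_mem (Ioo_mem_nhds hx₀I.1 hx₀I.2) fun y hy =>
          (hux t₀ ht₀' y (Ioo_subset_Icc_self hy)).hasDerivAt (Icc_mem_nhds hy.1 hy.2))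
        ((huxx t₀ ht₀ x₀ hx₀I).hasDerivAt (Ioo_mem_nhds hx₀I.1 hx₀I.2))
    nlinarith [hL x₀ hx₀I t₀ ht₀, mul_nonneg hε huxx_nonneg]
  · exact hminx.nonneg_of_robin (f := fun y => u y t₀) zero_lt_one hκ ⟨hx₀, hx₀I⟩ (hux t₀ ht₀')
      (hb0 t₀ ht₀') (hb1 t₀ ht₀')

/- The system has `n + 1` components indexed by `Fin (n + 1)`; the last one carries the
diffusion term, and `ψx`, `ψxx` are the space derivatives of that component only. -/
theorem stmt_6_general
    (n : ℕ) (T : ℝ) (hT : 0 < T)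
    (εn : ℝ) (hεn0 : 0 < εn)
    (a : Fin (n + 1) → Fin (n + 1) → ℝ → ℝ → ℝ)
    (ha_cont : ∀ i j, ContinuousOn (fun p : ℝ × ℝ => a i j p.1 p.2)
      (Set.Icc 0 1 ×ˢ Set.Icc 0 T))
    (ha_off : ∀ i j, i ≠ j → ∀ x ∈ Set.Icc (0:ℝ) 1, ∀ t ∈ Set.Icc (0:ℝ) T,
      a i j x t ≤ 0)
    (α : ℝ) (hα0 : 0 < α)
    (hα : ∀ i, ∀ x ∈ Set.Icc (0:ℝ) 1, ∀ t ∈ Set.Icc (0:ℝ) T, α < ∑ j, a i j x t)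
    (ψ ψt : Fin (n + 1) → ℝ → ℝ → ℝ) (ψx ψxx : ℝ → ℝ → ℝ)
    -- regularity: every ψ i continuous on Ω̄ with ∂ₜψ i continuous on Ω :
    (hψ_cont : ∀ i, ContinuousOn (fun p : ℝ × ℝ => ψ i p.1 p.2)
      (Set.Icc 0 1 ×ˢ Set.Icc 0 T))
    (hψt : ∀ i, ∀ x ∈ Set.Ioo (0:ℝ) 1, ∀ t ∈ Set.Ioc (0:ℝ) T,
      HasDerivWithinAt (fun s => ψ i x s) (ψt i x t) (Set.Icc 0 T) t)
    -- the last component additionally has ∂ₓψₙ continuous on Ω̄ and ∂ₓ²ψₙ on Ω :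
    (hψx : ∀ t ∈ Set.Icc (0:ℝ) T, ∀ x ∈ Set.Icc (0:ℝ) 1,
      HasDerivWithinAt (fun y => ψ (Fin.last n) y t) (ψx x t) (Set.Icc 0 1) x)
    (hψxx : ∀ t ∈ Set.Ioc (0:ℝ) T, ∀ x ∈ Set.Ioo (0:ℝ) 1,
      HasDerivWithinAt (fun y => ψx y t) (ψxx x t) (Set.Ioo 0 1) x)
    -- boundary, initial and interior sign conditions :
    (hb0 : ∀ t ∈ Set.Icc (0:ℝ) T,
      0 ≤ ψ (Fin.last n) 0 t - Real.sqrt εn * ψx 0 t)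
    (hb1 : ∀ t ∈ Set.Icc (0:ℝ) T,
      0 ≤ ψ (Fin.last n) 1 t + Real.sqrt εn * ψx 1 t)
    (hinit : ∀ i, ∀ x ∈ Set.Icc (0:ℝ) 1, 0 ≤ ψ i x 0)
    (hL1 : ∀ i, i ≠ Fin.last n → ∀ x ∈ Set.Ioo (0:ℝ) 1, ∀ t ∈ Set.Ioc (0:ℝ) T,
      0 ≤ ψt i x t + ∑ j, a i j x t * ψ j x t)
    (hLn : ∀ x ∈ Set.Ioo (0:ℝ) 1, ∀ t ∈ Set.Ioc (0:ℝ) T,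
      0 ≤ ψt (Fin.last n) x t - εn * ψxx x t +
        ∑ j, a (Fin.last n) j x t * ψ j x t) :
    ∀ i, ∀ x ∈ Set.Icc (0:ℝ) 1, ∀ t ∈ Set.Icc (0:ℝ) T, 0 ≤ ψ i x t := by
  have hK : IsCompact (Icc (0:ℝ) 1 ×ˢ Icc 0 T) := isCompact_Icc.prod isCompact_Icc
  have hKne : (Icc (0:ℝ) 1 ×ˢ Icc 0 T).Nonempty :=
    ⟨(0, 0), left_mem_Icc.2 zero_le_one, left_mem_Icc.2 hT.le⟩
  obtain ⟨i₀, ⟨x₀, t₀⟩, ⟨hx₀, ht₀⟩, hmin⟩ := hK.exists_forall_le_of_finite hKne hψ_cont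
  set m := ψ i₀ x₀ t₀
  have hm : ∀ j, ∀ x ∈ Icc (0:ℝ) 1, ∀ t ∈ Icc 0 T, m ≤ ψ j x t :=
    fun j x hx t ht => hmin j (x, t) ⟨hx, ht⟩
  suffices 0 ≤ m from fun i x hx t ht => this.trans (hm i x hx t ht)
  by_contra! hneg
  have hreaction : ∀ i, ∀ x ∈ Icc (0:ℝ) 1, ∀ t ∈ Icc 0 T,
      ∑ j, a i j x t * ψ j x t < a i i x t * (ψ i x t - m) := fun i x hx t ht =>
    sum_mul_lt_of_nonpos_of_ne i (fun j hj => ha_off i j hj.symm x hx t ht)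
      (fun j => hm j x hx t ht) hneg (hα0.trans (hα i x hx t ht))
  have ht₀pos : 0 < t₀ := ht₀.1.lt_of_ne fun h => by
    subst h; linarith [hinit i₀ x₀ hx₀]
  by_cases hi₀ : i₀ = Fin.last n
  · subst hi₀
    refine hneg.not_ge (nonneg_of_isMin_of_robin_supersolution
      (r := fun x t => ∑ j, a (Fin.last n) j x t * ψ j x t) hεn0.le (Real.sqrt_nonneg εn)
      hx₀ ⟨ht₀pos, ht₀.2⟩ (hm _) (hψt _) hψx hψxx hb0 hb1 hLn ?_)
    simpa [m] using hreaction (Fin.last n) x₀ hx₀ t₀ ht₀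
  · obtain ⟨q, -, hqmax⟩ := hK.exists_isMaxOn hKne (ha_cont i₀ i₀)
    refine (lt_of_hasDerivWithinAt_add_mul_sub_nonneg (A := a i₀ i₀ q.1 q.2) (hψ_cont i₀)
      (hψt i₀) (fun x hx t ht => ?_) (fun x hx => hneg.trans_le (hinit i₀ x hx))
      x₀ hx₀ t₀ ht₀).false
    have hxI : x ∈ Icc (0:ℝ) 1 := Ioo_subset_Icc_self hx
    have htI : t ∈ Icc 0 T := Ioc_subset_Icc_self ht
    have hdiag := mul_le_mul_of_nonneg_right (hqmax (show (x, t) ∈ _ from ⟨hxI, htI⟩))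
      (sub_nonneg.2 (hm i₀ x hxI t htI))
    linarith [hL1 i₀ hi₀ x hx t ht, hreaction i₀ x hxI t htI]

theorem stmt_6
    (n : ℕ) (T : ℝ) (hT : 0 < T)
    (εn : ℝ) (hεn0 : 0 < εn) (hεn1 : εn < 1)
    (a : Fin (n + 1) → Fin (n + 1) → ℝ → ℝ → ℝ)
    (ha_cont : ∀ i j, ContinuousOn (fun p : ℝ × ℝ => a i j p.1 p.2)
      (Set.Icc 0 1 ×ˢ Set.Icc 0 T))
    (ha_diag : ∀ i, ∀ x ∈ Set.Icc (0:ℝ) 1, ∀ t ∈ Set.Icc (0:ℝ) T,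
      ∑ j ∈ Finset.univ.erase i, |a i j x t| < a i i x t)
    (ha_off : ∀ i j, i ≠ j → ∀ x ∈ Set.Icc (0:ℝ) 1, ∀ t ∈ Set.Icc (0:ℝ) T,
      a i j x t ≤ 0)
    (α : ℝ) (hα0 : 0 < α)
    (hα : ∀ i, ∀ x ∈ Set.Icc (0:ℝ) 1, ∀ t ∈ Set.Icc (0:ℝ) T, α < ∑ j, a i j x t)
    (ψ ψt : Fin (n + 1) → ℝ → ℝ → ℝ) (ψx ψxx : ℝ → ℝ → ℝ)
    -- regularity: every ψ i continuous on Ω̄ with ∂ₜψ i continuous on Ω :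
    (hψ_cont : ∀ i, ContinuousOn (fun p : ℝ × ℝ => ψ i p.1 p.2)
      (Set.Icc 0 1 ×ˢ Set.Icc 0 T))
    (hψt : ∀ i, ∀ x ∈ Set.Ioo (0:ℝ) 1, ∀ t ∈ Set.Ioc (0:ℝ) T,
      HasDerivWithinAt (fun s => ψ i x s) (ψt i x t) (Set.Icc 0 T) t)
    (hψt_cont : ∀ i, ContinuousOn (fun p : ℝ × ℝ => ψt i p.1 p.2)
      (Set.Ioo 0 1 ×ˢ Set.Ioc 0 T))
    -- the last component additionally has ∂ₓψₙ continuous on Ω̄ and ∂ₓ²ψₙ on Ω :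
    (hψx : ∀ t ∈ Set.Icc (0:ℝ) T, ∀ x ∈ Set.Icc (0:ℝ) 1,
      HasDerivWithinAt (fun y => ψ (Fin.last n) y t) (ψx x t) (Set.Icc 0 1) x)
    (hψx_cont : ContinuousOn (fun p : ℝ × ℝ => ψx p.1 p.2)
      (Set.Icc 0 1 ×ˢ Set.Icc 0 T))
    (hψxx : ∀ t ∈ Set.Ioc (0:ℝ) T, ∀ x ∈ Set.Ioo (0:ℝ) 1,
      HasDerivWithinAt (fun y => ψx y t) (ψxx x t) (Set.Ioo 0 1) x)
    (hψxx_cont : ContinuousOn (fun p : ℝ × ℝ => ψxx p.1 p.2)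
      (Set.Ioo 0 1 ×ˢ Set.Ioc 0 T))
    -- boundary, initial and interior sign conditions :
    (hb0 : ∀ t ∈ Set.Icc (0:ℝ) T,
      0 ≤ ψ (Fin.last n) 0 t - Real.sqrt εn * ψx 0 t)
    (hb1 : ∀ t ∈ Set.Icc (0:ℝ) T,
      0 ≤ ψ (Fin.last n) 1 t + Real.sqrt εn * ψx 1 t)
    (hinit : ∀ i, ∀ x ∈ Set.Icc (0:ℝ) 1, 0 ≤ ψ i x 0)
    (hL1 : ∀ i, i ≠ Fin.last n → ∀ x ∈ Set.Ioo (0:ℝ) 1, ∀ t ∈ Set.Ioc (0:ℝ) T,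
      0 ≤ ψt i x t + ∑ j, a i j x t * ψ j x t)
    (hLn : ∀ x ∈ Set.Ioo (0:ℝ) 1, ∀ t ∈ Set.Ioc (0:ℝ) T,
      0 ≤ ψt (Fin.last n) x t - εn * ψxx x t +
        ∑ j, a (Fin.last n) j x t * ψ j x t) :
    ∀ i, ∀ x ∈ Set.Icc (0:ℝ) 1, ∀ t ∈ Set.Icc (0:ℝ) T, 0 ≤ ψ i x t :=
  stmt_6_general n T hT εn hεn0 a ha_cont ha_off α hα0 hα ψ ψt ψx ψxx hψ_cont hψt hψx hψxx hb0 hb1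
    hinit hL1 hLn
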